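/- arXiv:1801.05910 — 2 statements merged into one kernel-verified Lean document; each statement's English description precedes it below -/
import Mathlib

section
/- For all m ≥ 0, the dual third-order Jacobsthal and Jacobsthal-Lucas quaternions satisfy jN_{m+3} − 3·JN_{m+3} = 2·jN_m. -/
/-! The sequences `n ↦ j³ₙ₊₃ - 3 J³ₙ₊₃` and `n ↦ 2 j³ₙ` both solve the third-order Jacobsthal
recurrence and agree for `n = 0, 1, 2`, hence coincide. The dual quaternion built from four
consecutive terms of a sequence is additive in the sequence, so the identity lifts
coefficientwise. -/

def J3 : ℕ → ℤ
  | 0 => 0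
  | 1 => 1
  | 2 => 1
  | n + 3 => J3 (n + 2) + J3 (n + 1) + 2 * J3 n

def j3 : ℕ → ℤ
  | 0 => 2
  | 1 => 1
  | 2 => 5
  | n + 3 => j3 (n + 2) + j3 (n + 1) + 2 * j3 n

def V3 (n : ℕ) : ℤ := if n % 3 = 0 then 2 else if n % 3 = 1 then -3 else 1
noncomputable section

abbrev DualQ := TrivSqZeroExt ℝ (Fin 3 → ℝ)

def qi : DualQ := TrivSqZeroExt.inr (Pi.single 0 1)
def qj : DualQ := TrivSqZeroExt.inr (Pi.single 1 1)
def qk : DualQ := TrivSqZeroExt.inr (Pi.single 2 1)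

def JN (m : ℕ) : DualQ :=
  (J3 m : DualQ) + (J3 (m + 1) : DualQ) * qi + (J3 (m + 2) : DualQ) * qj + (J3 (m + 3) : DualQ) * qk

def jN (m : ℕ) : DualQ :=
  (j3 m : DualQ) + (j3 (m + 1) : DualQ) * qi + (j3 (m + 2) : DualQ) * qj + (j3 (m + 3) : DualQ) * qk

def conjJN (m : ℕ) : DualQ :=
  (J3 m : DualQ) - (J3 (m + 1) : DualQ) * qi - (J3 (m + 2) : DualQ) * qj - (J3 (m + 3) : DualQ) * qk

def conjjN (m : ℕ) : DualQ :=
  (j3 m : DualQ) - (j3 (m + 1) : DualQ) * qi - (j3 (m + 2) : DualQ) * qj - (j3 (m + 3) : DualQ) * qk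

def VN (m : ℕ) : DualQ :=
  (V3 m : DualQ) + (V3 (m + 1) : DualQ) * qi + (V3 (m + 2) : DualQ) * qj + (V3 (m + 3) : DualQ) * qk


theorem LinearRecurrence.IsSolution.shift {R : Type*} [CommSemiring R] {E : LinearRecurrence R}
    {u : ℕ → R} (hu : E.IsSolution u) (k : ℕ) : E.IsSolution fun n => u (n + k) := by
  intro n
  simpa only [add_right_comm] using hu (n + k)

def jacobsthal3Rec : LinearRecurrence ℤ := ⟨3, ![2, 1, 1]⟩

theorem isSolution_jacobsthal3Rec_iff (u : ℕ → ℤ) :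
    jacobsthal3Rec.IsSolution u ↔ ∀ n, u (n + 3) = u (n + 2) + u (n + 1) + 2 * u n := by
  refine forall_congr' fun n => ?_
  show u (n + 3) = ∑ i : Fin 3, ![2, 1, 1] i * u (n + i) ↔ _
  simp only [Fin.sum_univ_three, Matrix.cons_val, Fin.val_zero, Fin.val_one, Fin.val_two,
    add_zero, one_mul]
  constructor <;> intro h <;> linarith

theorem isSolution_J3 : jacobsthal3Rec.IsSolution J3 :=
  (isSolution_jacobsthal3Rec_iff _).2 fun _ => rfl

theorem isSolution_j3 : jacobsthal3Rec.IsSolution j3 :=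
  (isSolution_jacobsthal3Rec_iff _).2 fun _ => rfl

theorem j3_add_three_sub_three_mul_J3 :
    ((fun n => j3 (n + 3)) - (3 : ℤ) • fun n => J3 (n + 3)) = (2 : ℤ) • j3 := by
  have hl : ((fun n => j3 (n + 3)) - (3 : ℤ) • fun n => J3 (n + 3)) ∈ jacobsthal3Rec.solSpace :=
    Submodule.sub_mem _ (isSolution_j3.shift 3) (Submodule.smul_mem _ _ (isSolution_J3.shift 3))
  have hr : (2 : ℤ) • j3 ∈ jacobsthal3Rec.solSpace := Submodule.smul_mem _ _ isSolution_j3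
  refine (jacobsthal3Rec.eq_iff_eqOn_range_order _ _ hl hr).2 ?_
  intro n hn
  simp only [jacobsthal3Rec, Finset.coe_range, Set.mem_Iio] at hn
  interval_cases n <;> rfl

def dualQuatOf (m : ℕ) : (ℕ → ℤ) →+ DualQ :=
  AddMonoidHom.mk' (fun u => (u m : DualQ) + (u (m + 1) : DualQ) * qi + (u (m + 2) : DualQ) * qj
    + (u (m + 3) : DualQ) * qk) fun u v => by simp only [Pi.add_apply, Int.cast_add]; ring

theorem stmt_14 : ∀ m : ℕ, jN (m + 3) - 3 * JN (m + 3) = 2 * jN m := by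
  intro m
  have hJ : JN (m + 3) = dualQuatOf m fun n => J3 (n + 3) := rfl
  have hj : jN (m + 3) = dualQuatOf m fun n => j3 (n + 3) := rfl
  calc jN (m + 3) - 3 * JN (m + 3)
      = dualQuatOf m ((fun n => j3 (n + 3)) - (3 : ℤ) • fun n => J3 (n + 3)) := by
        rw [hj, hJ, map_sub, map_zsmul, zsmul_eq_mul, Int.cast_ofNat]
    _ = 2 * jN m := by
        rw [j3_add_three_sub_three_mul_J3, map_zsmul, zsmul_eq_mul, Int.cast_ofNat]; rfl
end
end

section
/- For all m ≥ 0, 21·∑_{s=0}^{m} JN_s = 21·JN_{m+1} − (7·(1 + i + 4j + 7k) − 4·VN_{m+1} + VN_m), where VN_m = Vₘ + Vₘ₊₁·i + Vₘ₊₂·j + Vₘ₊₃·k and Vₙ is the 3-periodic sequence taking values 2, −3, 1 for n ≡ 0, 1, 2 (mod 3). -/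
noncomputable section

lemma V3_add_three (n : ℕ) : V3 (n + 3) = V3 n := by
  simp [V3]

/- Since x³ - x² - x - 2 = (x - 2)(x² + x + 1), the sequence J3 (n + 1) - 2 J3 n satisfies the
period-3 recurrence of V3; this is the resulting identity. -/
lemma J3_add_two_eq (n : ℕ) :
    21 * J3 (n + 2) = 42 * J3 (n + 1) - 4 * V3 (n + 2) + 5 * V3 (n + 1) - V3 n := by
  induction n using Nat.twoStepInduction with
  | zero => decide
  | one => decide
  | more n ih₀ ih₁ =>
    have hJ : J3 (n + 4) = J3 (n + 3) + J3 (n + 2) + 2 * J3 (n + 1) := rfl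
    have hV₀ := V3_add_three n
    have hV₁ := V3_add_three (n + 1)
    simp only [Nat.add_assoc, Nat.reduceAdd] at ih₁ hV₁ ⊢
    omega

lemma JN_add_two_eq (n : ℕ) :
    21 * JN (n + 2) = 42 * JN (n + 1) - 4 * VN (n + 2) + 5 * VN (n + 1) - VN n := by
  have h (k : ℕ) := congrArg (Int.cast : ℤ → DualQ) (J3_add_two_eq (n + k))
  have h₀ := h 0
  have h₁ := h 1
  have h₂ := h 2
  have h₃ := h 3
  simp only [JN, VN]
  push_cast [Nat.add_assoc, Nat.reduceAdd] at h₀ h₁ h₂ h₃ ⊢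
  linear_combination h₀ + h₁ * qi + h₂ * qj + h₃ * qk

theorem stmt_17 : ∀ m : ℕ,
    21 * ∑ s ∈ Finset.range (m + 1), JN s =
      21 * JN (m + 1) - (7 * (1 + qi + 4 * qj + 7 * qk) - 4 * VN (m + 1) + VN m) := by
  intro m
  induction m with
  | zero =>
    norm_num [JN, VN, J3, V3]
    ring
  | succ n ih =>
    rw [Finset.sum_range_succ, mul_add, ih]
    linear_combination -JN_add_two_eq n
end
end
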